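/- arXiv:2508.11193 — 2 statements merged into one kernel-verified Lean document; each statement's English description precedes it below -/
import Mathlib

section
/- For each α ∈ {1,2} there exist a finite subset Λ_α ⊂ S²∩ℚ³ (the rational points of the unit sphere in ℝ³), with Λ₁∩Λ₂ = ∅, a constant δ>0, and smooth functions Γ_k : {R symmetric 3×3 real matrix : |R−Id| ≤ δ} → ℝ for each k ∈ Λ_α, such that every symmetric 3×3 matrix R with |R−Id| ≤ δ admits the decomposition R = Σ_{k∈Λ_α} Γ_k(R)² (k⊗k). -/
noncomputable section

abbrev V3 : Type := Fin 3 → ℝ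
abbrev M3 : Type := Fin 3 → Fin 3 → ℝ

/-- `k ⊗ k`. -/
def tens (a b : V3) : M3 := fun i j => a i * b j

/-- The 3×3 identity matrix. -/
def idM : M3 := fun i j => if i = j then (1:ℝ) else 0

/-- Symmetric matrices at distance at most `δ` from the identity. -/
def SymmNear (δ : ℝ) : Set M3 := {R | (∀ i j, R i j = R j i) ∧ ‖R - idM‖ ≤ δ}

/-- generic coefficient functional -/
def cgen (p q e : ℝ) (i1 i2 i3 j k : Fin 3) : M3 → ℝ :=
  fun R => (1/(2*(p^6+q^6)))*(p^4*R i1 i1 + q^4*R i2 i2 - p^2*q^2*R i3 i3)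
    + (e/(2*p*q))*(R j k)

open Classical in
def cfun (p q : ℝ) (k : V3) : M3 → ℝ :=
  if k = ![p,q,0] then cgen p q 1 0 1 2 0 1
  else if k = ![p,-q,0] then cgen p q (-1) 0 1 2 0 1
  else if k = ![0,p,q] then cgen p q 1 1 2 0 1 2
  else if k = ![0,p,-q] then cgen p q (-1) 1 2 0 1 2
  else if k = ![q,0,p] then cgen p q 1 2 0 1 0 2
  else if k = ![q,0,-p] then cgen p q (-1) 2 0 1 0 2
  else 0

def Gam (p q : ℝ) (k : V3) (R : M3) : ℝ := Real.sqrt (cfun p q k R)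

open Classical in
def Lam (p q : ℝ) : Finset V3 :=
  {![p,q,0], ![p,-q,0], ![0,p,q], ![0,p,-q], ![q,0,p], ![q,0,-p]}

lemma vne {x y : V3} (i : Fin 3) (h : x i ≠ y i) : x ≠ y := fun e => h (congrFun e i)

lemma cgen_contDiff {n : WithTop ℕ∞} (p q e : ℝ) (i1 i2 i3 j k : Fin 3) :
    ContDiff ℝ n (cgen p q e i1 i2 i3 j k) := by unfold cgen; fun_prop

lemma cgen_continuous (p q e : ℝ) (i1 i2 i3 j k : Fin 3) :
    Continuous (cgen p q e i1 i2 i3 j k) := (cgen_contDiff (n := (⊤ : WithTop ℕ∞)) p q e i1 i2 i3 j k).continuous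

lemma pos_near (g : M3 → ℝ) (hg : Continuous g) (h0 : 0 < g idM) :
    ∃ δ : ℝ, 0 < δ ∧ ∀ R : M3, ‖R - idM‖ ≤ δ → 0 < g R := by
  obtain ⟨δ, hδ, hb⟩ := Metric.continuousAt_iff.mp hg.continuousAt (g idM) h0
  refine ⟨δ/2, by positivity, fun R hR => ?_⟩
  have h1 : dist (g R) (g idM) < g idM := hb (by rw [dist_eq_norm]; linarith)
  have h2 := abs_lt.mp (by simpa [Real.dist_eq] using h1)
  linarith [h2.1]

lemma symmNear_mono {δ δ' : ℝ} (h : δ ≤ δ') : SymmNear δ ⊆ SymmNear δ' :=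
  fun R hR => ⟨hR.1, hR.2.trans h⟩

set_option maxHeartbeats 1000000 in
lemma decomp (p q : ℝ) (hD : p^6+q^6 ≠ 0) (hp0 : p ≠ 0) (hq0 : q ≠ 0) (R : M3)
    (h10 : R 1 0 = R 0 1) (h20 : R 2 0 = R 0 2) (h21 : R 2 1 = R 1 2) :
    R = cgen p q 1 0 1 2 0 1 R • tens ![p,q,0] ![p,q,0]
      + cgen p q (-1) 0 1 2 0 1 R • tens ![p,-q,0] ![p,-q,0]
      + cgen p q 1 1 2 0 1 2 R • tens ![0,p,q] ![0,p,q]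
      + cgen p q (-1) 1 2 0 1 2 R • tens ![0,p,-q] ![0,p,-q]
      + cgen p q 1 2 0 1 0 2 R • tens ![q,0,p] ![q,0,p]
      + cgen p q (-1) 2 0 1 0 2 R • tens ![q,0,-p] ![q,0,-p] := by
  funext i j
  fin_cases i <;> fin_cases j <;>
    simp only [Fin.zero_eta, Fin.mk_one, Fin.reduceFinMk] <;>
    simp only [cgen, tens, Pi.add_apply, Pi.smul_apply, smul_eq_mul,
      Matrix.cons_val_zero, Matrix.cons_val_one, Matrix.head_cons,
      Matrix.cons_val_two, Matrix.tail_cons]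
  all_goals (try rw [h10]); (try rw [h20]); (try rw [h21])
  all_goals field_simp
  all_goals ring

set_option maxHeartbeats 1000000 in
lemma key (p q : ℝ) (hp : 0 < p) (hq : 0 < q) :
    ∃ δ : ℝ, 0 < δ ∧
      (∀ k ∈ Lam p q, ContDiffOn ℝ (⊤ : WithTop ℕ∞) (Gam p q k) (SymmNear δ)) ∧
      ∀ R ∈ SymmNear δ, R = ∑ k ∈ Lam p q, (Gam p q k R)^2 • tens k k := by
  have hD : (p^6+q^6) ≠ 0 := by positivity
  have hp0 : p ≠ 0 := ne_of_gt hp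
  have hq0 : q ≠ 0 := ne_of_gt hq
  -- the six vectors
  set v1 : V3 := ![p,q,0] with hv1
  set v2 : V3 := ![p,-q,0] with hv2
  set v3 : V3 := ![0,p,q] with hv3
  set v4 : V3 := ![0,p,-q] with hv4
  set v5 : V3 := ![q,0,p] with hv5
  set v6 : V3 := ![q,0,-p] with hv6
  -- pairwise distinct
  have n12 : v1 ≠ v2 := vne 1 (by simp [hv1, hv2]; intro h; linarith)
  have n13 : v1 ≠ v3 := vne 0 (by simp [hv1, hv3]; linarith)
  have n14 : v1 ≠ v4 := vne 0 (by simp [hv1, hv4]; linarith)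
  have n15 : v1 ≠ v5 := vne 1 (by simp [hv1, hv5]; linarith)
  have n16 : v1 ≠ v6 := vne 1 (by simp [hv1, hv6]; linarith)
  have n23 : v2 ≠ v3 := vne 0 (by simp [hv2, hv3]; linarith)
  have n24 : v2 ≠ v4 := vne 0 (by simp [hv2, hv4]; linarith)
  have n25 : v2 ≠ v5 := vne 1 (by simp [hv2, hv5]; intro h; linarith)
  have n26 : v2 ≠ v6 := vne 1 (by simp [hv2, hv6]; intro h; linarith)
  have n34 : v3 ≠ v4 := vne 2 (by simp [hv3, hv4]; intro h; linarith)
  have n35 : v3 ≠ v5 := vne 0 (by simp [hv3, hv5]; intro h; linarith)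
  have n36 : v3 ≠ v6 := vne 0 (by simp [hv3, hv6]; intro h; linarith)
  have n45 : v4 ≠ v5 := vne 0 (by simp [hv4, hv5]; intro h; linarith)
  have n46 : v4 ≠ v6 := vne 0 (by simp [hv4, hv6]; intro h; linarith)
  have n56 : v5 ≠ v6 := vne 2 (by simp [hv5, hv6]; intro h; linarith)
  -- the six coefficient functionals
  set c1 := cgen p q 1 0 1 2 0 1 with hc1
  set c2 := cgen p q (-1) 0 1 2 0 1 with hc2
  set c3 := cgen p q 1 1 2 0 1 2 with hc3
  set c4 := cgen p q (-1) 1 2 0 1 2 with hc4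
  set c5 := cgen p q 1 2 0 1 0 2 with hc5
  set c6 := cgen p q (-1) 2 0 1 0 2 with hc6
  have e1 : cfun p q v1 = c1 := by rw [cfun, if_pos rfl]
  have e2 : cfun p q v2 = c2 := by rw [cfun, if_neg (Ne.symm n12), if_pos rfl]
  have e3 : cfun p q v3 = c3 := by
    rw [cfun, if_neg (Ne.symm n13), if_neg (Ne.symm n23), if_pos rfl]
  have e4 : cfun p q v4 = c4 := by
    rw [cfun, if_neg (Ne.symm n14), if_neg (Ne.symm n24), if_neg (Ne.symm n34), if_pos rfl]
  have e5 : cfun p q v5 = c5 := by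
    rw [cfun, if_neg (Ne.symm n15), if_neg (Ne.symm n25), if_neg (Ne.symm n35),
      if_neg (Ne.symm n45), if_pos rfl]
  have e6 : cfun p q v6 = c6 := by
    rw [cfun, if_neg (Ne.symm n16), if_neg (Ne.symm n26), if_neg (Ne.symm n36),
      if_neg (Ne.symm n46), if_neg (Ne.symm n56), if_pos rfl]
  -- positivity of the coefficients near the identity
  set g : M3 → ℝ := fun R =>
    min (min (c1 R) (c2 R)) (min (min (c3 R) (c4 R)) (min (c5 R) (c6 R))) with hg
  have hgc : Continuous g := by
    refine Continuous.min (Continuous.min ?_ ?_)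
      (Continuous.min (Continuous.min ?_ ?_) (Continuous.min ?_ ?_)) <;>
      first
        | exact cgen_continuous p q 1 0 1 2 0 1 | exact cgen_continuous p q (-1) 0 1 2 0 1
        | exact cgen_continuous p q 1 1 2 0 1 2 | exact cgen_continuous p q (-1) 1 2 0 1 2
        | exact cgen_continuous p q 1 2 0 1 0 2 | exact cgen_continuous p q (-1) 2 0 1 0 2
  have hgId : 0 < g idM := by
    have hval : (0:ℝ) < (1/(2*(p^6+q^6)))*(p^4 + q^4 - p^2*q^2) := by
      have h1 : 0 < p^4 + q^4 - p^2*q^2 := by nlinarith [sq_nonneg (p^2-q^2), mul_pos (pow_pos hp 2) (pow_pos hq 2)]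
      positivity
    have : ∀ (e : ℝ) (i1 i2 i3 j k : Fin 3), e = 1 ∨ e = -1 → j ≠ k →
        cgen p q e i1 i2 i3 j k idM = (1/(2*(p^6+q^6)))*(p^4 + q^4 - p^2*q^2) := by
      intro e i1 i2 i3 j k _ hjk
      simp [cgen, idM, hjk]
    rw [hg]
    simp only [hc1, hc2, hc3, hc4, hc5, hc6]
    rw [this 1 0 1 2 0 1 (Or.inl rfl) (by decide), this (-1) 0 1 2 0 1 (Or.inr rfl) (by decide),
      this 1 1 2 0 1 2 (Or.inl rfl) (by decide), this (-1) 1 2 0 1 2 (Or.inr rfl) (by decide),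
      this 1 2 0 1 0 2 (Or.inl rfl) (by decide), this (-1) 2 0 1 0 2 (Or.inr rfl) (by decide)]
    simpa using hval
  obtain ⟨δ, hδ, hpos⟩ := pos_near g hgc hgId
  have hposall : ∀ R ∈ SymmNear δ, 0 < c1 R ∧ 0 < c2 R ∧ 0 < c3 R ∧ 0 < c4 R ∧
      0 < c5 R ∧ 0 < c6 R := by
    intro R hR
    have h := hpos R hR.2
    rw [hg] at h
    simp only [lt_min_iff] at h
    exact ⟨h.1.1, h.1.2, h.2.1.1, h.2.1.2, h.2.2.1, h.2.2.2⟩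
  refine ⟨δ, hδ, ?_, ?_⟩
  · -- smoothness
    intro k hk R hR
    have hcd : ∀ c : M3 → ℝ, ContDiff ℝ (⊤ : WithTop ℕ∞) c → 0 < c R →
        ContDiffWithinAt ℝ (⊤ : WithTop ℕ∞) (fun S => Real.sqrt (c S)) (SymmNear δ) R := by
      intro c hc hcR
      exact ((Real.contDiffAt_sqrt (ne_of_gt hcR)).comp R hc.contDiffAt).contDiffWithinAt
    obtain ⟨p1, p2, p3, p4, p5, p6⟩ := hposall R hR
    simp only [Lam, Finset.mem_insert, Finset.mem_singleton] at hk
    rcases hk with rfl | rfl | rfl | rfl | rfl | rfl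
    · rw [show Gam p q v1 = fun S => Real.sqrt (c1 S) from by funext S; rw [Gam, e1]]
      exact hcd c1 (cgen_contDiff _ _ _ _ _ _ _ _) p1
    · rw [show Gam p q v2 = fun S => Real.sqrt (c2 S) from by funext S; rw [Gam, e2]]
      exact hcd c2 (cgen_contDiff _ _ _ _ _ _ _ _) p2
    · rw [show Gam p q v3 = fun S => Real.sqrt (c3 S) from by funext S; rw [Gam, e3]]
      exact hcd c3 (cgen_contDiff _ _ _ _ _ _ _ _) p3
    · rw [show Gam p q v4 = fun S => Real.sqrt (c4 S) from by funext S; rw [Gam, e4]]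
      exact hcd c4 (cgen_contDiff _ _ _ _ _ _ _ _) p4
    · rw [show Gam p q v5 = fun S => Real.sqrt (c5 S) from by funext S; rw [Gam, e5]]
      exact hcd c5 (cgen_contDiff _ _ _ _ _ _ _ _) p5
    · rw [show Gam p q v6 = fun S => Real.sqrt (c6 S) from by funext S; rw [Gam, e6]]
      exact hcd c6 (cgen_contDiff _ _ _ _ _ _ _ _) p6
  · -- the decomposition identity
    intro R hR
    obtain ⟨p1, p2, p3, p4, p5, p6⟩ := hposall R hR
    have hsum : ∀ f : V3 → M3, ∑ k ∈ Lam p q, f k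
        = f v1 + f v2 + f v3 + f v4 + f v5 + f v6 := by
      intro f
      rw [Lam]
      rw [Finset.sum_insert (by simp [n12, n13, n14, n15, n16, hp0, hq0, hp0.symm, hq0.symm, CharZero.eq_neg_self_iff]),
        Finset.sum_insert (by simp [n23, n24, n25, n26, hp0, hq0, hp0.symm, hq0.symm, CharZero.eq_neg_self_iff]),
        Finset.sum_insert (by simp [n34, n35, n36, hp0, hq0, hp0.symm, hq0.symm, CharZero.eq_neg_self_iff]),
        Finset.sum_insert (by simp [n45, n46, hp0, hq0, hp0.symm, hq0.symm, CharZero.eq_neg_self_iff]),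
        Finset.sum_insert (by simp [n56, hp0, hq0, hp0.symm, hq0.symm, CharZero.eq_neg_self_iff]), Finset.sum_singleton]
      abel
    rw [hsum]
    have sq1 : (Gam p q v1 R)^2 = c1 R := by rw [Gam, e1, Real.sq_sqrt p1.le]
    have sq2 : (Gam p q v2 R)^2 = c2 R := by rw [Gam, e2, Real.sq_sqrt p2.le]
    have sq3 : (Gam p q v3 R)^2 = c3 R := by rw [Gam, e3, Real.sq_sqrt p3.le]
    have sq4 : (Gam p q v4 R)^2 = c4 R := by rw [Gam, e4, Real.sq_sqrt p4.le]
    have sq5 : (Gam p q v5 R)^2 = c5 R := by rw [Gam, e5, Real.sq_sqrt p5.le]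
    have sq6 : (Gam p q v6 R)^2 = c6 R := by rw [Gam, e6, Real.sq_sqrt p6.le]
    rw [sq1, sq2, sq3, sq4, sq5, sq6]
    exact decomp p q hD hp0 hq0 R (hR.1 1 0) (hR.1 2 0) (hR.1 2 1)

set_option maxHeartbeats 2000000 in
/-- Geometric Lemma 3.1: there are two disjoint finite families
`Λ₁, Λ₂ ⊂ S²∩ℚ³` and smooth coefficients `Γ_k` giving the rank-one decomposition
`R = Σ_{k∈Λ_α} Γ_k(R)² (k⊗k)` for all symmetric `R` with `|R − Id| ≤ δ`. -/
theorem stmt4 :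
    ∃ (Λ : Fin 2 → Finset V3) (δ : ℝ), 0 < δ ∧ Disjoint (Λ 0) (Λ 1) ∧
      ∀ α : Fin 2,
        (∀ k ∈ Λ α, (∑ i : Fin 3, (k i)^2) = 1 ∧ ∀ i : Fin 3, ∃ q : ℚ, k i = (q:ℝ)) ∧
        ∃ Γ : V3 → M3 → ℝ,
          (∀ k ∈ Λ α, ContDiffOn ℝ (⊤ : ℕ∞) (Γ k) (SymmNear δ)) ∧
          ∀ R ∈ SymmNear δ, R = ∑ k ∈ Λ α, (Γ k R)^2 • tens k k := by
  obtain ⟨δ₀, hδ₀, hsm₀, hdec₀⟩ := key (3/5) (4/5) (by norm_num) (by norm_num)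
  obtain ⟨δ₁, hδ₁, hsm₁, hdec₁⟩ := key (5/13) (12/13) (by norm_num) (by norm_num)
  refine ⟨![Lam (3/5) (4/5), Lam (5/13) (12/13)], min δ₀ δ₁, lt_min hδ₀ hδ₁, ?_, ?_⟩
  · rw [show (![Lam (3/5) (4/5), Lam (5/13) (12/13)] : Fin 2 → Finset V3) 0
        = Lam (3/5) (4/5) from rfl,
      show (![Lam (3/5) (4/5), Lam (5/13) (12/13)] : Fin 2 → Finset V3) 1
        = Lam (5/13) (12/13) from rfl]
    rw [Finset.disjoint_left]
    intro k hk hk'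
    simp only [Lam, Finset.mem_insert, Finset.mem_singleton] at hk hk'
    rcases hk with rfl|rfl|rfl|rfl|rfl|rfl <;>
      rcases hk' with h|h|h|h|h|h <;>
      first
        | (have h0 := congrFun h 0
           norm_num [Matrix.cons_val_zero] at h0
           done)
        | (have h1 := congrFun h 1
           norm_num [Matrix.cons_val_one, Matrix.head_cons] at h1
           done)
  · intro α
    fin_cases α
    · constructor
      · intro k hk
        replace hk : k ∈ Lam (3/5) (4/5) := hk
        simp only [Lam, Finset.mem_insert, Finset.mem_singleton] at hk
        rcases hk with rfl|rfl|rfl|rfl|rfl|rfl <;>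
          refine ⟨by norm_num [Fin.sum_univ_three, Matrix.cons_val_zero, Matrix.cons_val_one,
            Matrix.head_cons, Matrix.cons_val_two, Matrix.tail_cons], fun i => ?_⟩ <;>
          fin_cases i <;>
          first
            | (refine ⟨0, ?_⟩
               norm_num [Fin.zero_eta, Fin.mk_one, Fin.reduceFinMk, Matrix.cons_val_zero,
                Matrix.cons_val_one, Matrix.head_cons, Matrix.cons_val_two, Matrix.tail_cons]
               done)
            | (refine ⟨3/5, ?_⟩
               norm_num [Fin.zero_eta, Fin.mk_one, Fin.reduceFinMk, Matrix.cons_val_zero,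
                Matrix.cons_val_one, Matrix.head_cons, Matrix.cons_val_two, Matrix.tail_cons]
               done)
            | (refine ⟨-(3/5), ?_⟩
               norm_num [Fin.zero_eta, Fin.mk_one, Fin.reduceFinMk, Matrix.cons_val_zero,
                Matrix.cons_val_one, Matrix.head_cons, Matrix.cons_val_two, Matrix.tail_cons]
               done)
            | (refine ⟨4/5, ?_⟩
               norm_num [Fin.zero_eta, Fin.mk_one, Fin.reduceFinMk, Matrix.cons_val_zero,
                Matrix.cons_val_one, Matrix.head_cons, Matrix.cons_val_two, Matrix.tail_cons]
               done)
            | (refine ⟨-(4/5), ?_⟩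
               norm_num [Fin.zero_eta, Fin.mk_one, Fin.reduceFinMk, Matrix.cons_val_zero,
                Matrix.cons_val_one, Matrix.head_cons, Matrix.cons_val_two, Matrix.tail_cons]
               done)
      · refine ⟨Gam (3/5) (4/5), fun k hk => ((hsm₀ k hk).mono
          (symmNear_mono (min_le_left δ₀ δ₁))).of_le le_top, fun R hR =>
          hdec₀ R (symmNear_mono (min_le_left δ₀ δ₁) hR)⟩
    · constructor
      · intro k hk
        replace hk : k ∈ Lam (5/13) (12/13) := hk
        simp only [Lam, Finset.mem_insert, Finset.mem_singleton] at hk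
        rcases hk with rfl|rfl|rfl|rfl|rfl|rfl <;>
          refine ⟨by norm_num [Fin.sum_univ_three, Matrix.cons_val_zero, Matrix.cons_val_one,
            Matrix.head_cons, Matrix.cons_val_two, Matrix.tail_cons], fun i => ?_⟩ <;>
          fin_cases i <;>
          first
            | (refine ⟨0, ?_⟩
               norm_num [Fin.zero_eta, Fin.mk_one, Fin.reduceFinMk, Matrix.cons_val_zero,
                Matrix.cons_val_one, Matrix.head_cons, Matrix.cons_val_two, Matrix.tail_cons]
               done)
            | (refine ⟨5/13, ?_⟩
               norm_num [Fin.zero_eta, Fin.mk_one, Fin.reduceFinMk, Matrix.cons_val_zero,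
                Matrix.cons_val_one, Matrix.head_cons, Matrix.cons_val_two, Matrix.tail_cons]
               done)
            | (refine ⟨-(5/13), ?_⟩
               norm_num [Fin.zero_eta, Fin.mk_one, Fin.reduceFinMk, Matrix.cons_val_zero,
                Matrix.cons_val_one, Matrix.head_cons, Matrix.cons_val_two, Matrix.tail_cons]
               done)
            | (refine ⟨12/13, ?_⟩
               norm_num [Fin.zero_eta, Fin.mk_one, Fin.reduceFinMk, Matrix.cons_val_zero,
                Matrix.cons_val_one, Matrix.head_cons, Matrix.cons_val_two, Matrix.tail_cons]
               done)
            | (refine ⟨-(12/13), ?_⟩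
               norm_num [Fin.zero_eta, Fin.mk_one, Fin.reduceFinMk, Matrix.cons_val_zero,
                Matrix.cons_val_one, Matrix.head_cons, Matrix.cons_val_two, Matrix.tail_cons]
               done)
      · refine ⟨Gam (5/13) (12/13), fun k hk => ((hsm₁ k hk).mono
          (symmNear_mono (min_le_right δ₀ δ₁))).of_le le_top, fun R hR =>
          hdec₁ R (symmNear_mono (min_le_right δ₀ δ₁) hR)⟩
end
end

section
/- Let a ∈ ℤ²∖{0}, let g, G : ℝ → ℝ be smooth 2π-periodic functions with G'' = g, let k ∈ ℝ³ satisfy k₁a₁ + k₂a₂ = 0, and set W(x) := g(a·x)k, Φ(x) := |a|^{−2} G(a·x) (so that ΔΦ = g(a·x)), and Ω := k ⊗ ∇Φ − ∇Φ ⊗ k, where ∇Φ = (∂₁Φ, ∂₂Φ, 0)ᵀ. Then Ω is a skew-symmetric 3×3 matrix field on T² with div Ω = W; moreover, for every smooth scalar b : T² → ℝ, the vector field div(bΩ) equals bW + Ω∇b (with (Ω∇b)ᵢ = Ω_{i1}∂₁b + Ω_{i2}∂₂b) and is divergence-free: div(div(bΩ)) = 0. -/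
open MeasureTheory Real Filter Topology

noncomputable section

abbrev V2 : Type := ℝ × ℝ
def Q2 : Set V2 := Set.Icc (0:ℝ) (2*π) ×ˢ Set.Icc (0:ℝ) (2*π)

def pd1 (f : V2 → ℝ) (x : V2) : ℝ := fderiv ℝ f x (1, 0)
def pd2 (f : V2 → ℝ) (x : V2) : ℝ := fderiv ℝ f x (0, 1)

/-- `a·x = a₁x₁ + a₂x₂` for `a ∈ ℤ²`. -/
def adot (a : ℤ × ℤ) (x : V2) : ℝ := a.1 * x.1 + a.2 * x.2

/-- `W(x) = g(a·x) k`. -/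
def Wf (a : ℤ × ℤ) (g : ℝ → ℝ) (k : V3) : V2 → V3 := fun x i => g (adot a x) * k i

/-- `Φ(x) = |a|⁻² G(a·x)`. -/
def Phif (a : ℤ × ℤ) (G : ℝ → ℝ) : V2 → ℝ :=
  fun x => (((a.1:ℝ)^2 + (a.2:ℝ)^2))⁻¹ * G (adot a x)

/-- `∇Φ = (∂₁Φ, ∂₂Φ, 0)`. -/
def gradPhi (a : ℤ × ℤ) (G : ℝ → ℝ) (x : V2) : V3 :=
  ![pd1 (Phif a G) x, pd2 (Phif a G) x, 0]

/-- `Ω = k ⊗ ∇Φ − ∇Φ ⊗ k`. -/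
def Om (a : ℤ × ℤ) (G : ℝ → ℝ) (k : V3) : V2 → M3 :=
  fun x i j => k i * gradPhi a G x j - gradPhi a G x i * k j

namespace Stmt8Aux

def La (a : ℤ × ℤ) : V2 →L[ℝ] ℝ :=
  (a.1:ℝ) • (ContinuousLinearMap.fst ℝ ℝ ℝ) + (a.2:ℝ) • (ContinuousLinearMap.snd ℝ ℝ ℝ)

lemma La_eq (a : ℤ × ℤ) : ⇑(La a) = adot a := by
  funext x; simp [La, adot, smul_eq_mul]

lemma hasFDerivAt_adot (a : ℤ × ℤ) (x : V2) : HasFDerivAt (adot a) (La a) x := by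
  rw [← La_eq]; exact (La a).hasFDerivAt

lemma adot_contDiff (a : ℤ × ℤ) : ContDiff ℝ (⊤:ℕ∞) (adot a) := by
  rw [← La_eq]; exact (La a).contDiff

lemma hasFDerivAt_comp (a : ℤ × ℤ) {F : ℝ → ℝ} {x : V2}
    (hF : DifferentiableAt ℝ F (adot a x)) :
    HasFDerivAt (fun y => F (adot a y)) (deriv F (adot a x) • La a) x := by
  have := (hF.hasDerivAt).comp_hasFDerivAt x (hasFDerivAt_adot a x)
  exact this

lemma pd1_hasf {f : V2 → ℝ} {D : V2 →L[ℝ] ℝ} {x : V2} (h : HasFDerivAt f D x) :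
    pd1 f x = D (1,0) := by rw [pd1, h.fderiv]

lemma pd2_hasf {f : V2 → ℝ} {D : V2 →L[ℝ] ℝ} {x : V2} (h : HasFDerivAt f D x) :
    pd2 f x = D (0,1) := by rw [pd2, h.fderiv]

lemma pd1_comp (a : ℤ × ℤ) {F : ℝ → ℝ} {x : V2}
    (hF : DifferentiableAt ℝ F (adot a x)) :
    pd1 (fun y => F (adot a y)) x = a.1 * deriv F (adot a x) := by
  rw [pd1_hasf (hasFDerivAt_comp a hF)]; simp [La, smul_eq_mul]; ring

lemma pd2_comp (a : ℤ × ℤ) {F : ℝ → ℝ} {x : V2}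
    (hF : DifferentiableAt ℝ F (adot a x)) :
    pd2 (fun y => F (adot a y)) x = a.2 * deriv F (adot a x) := by
  rw [pd2_hasf (hasFDerivAt_comp a hF)]; simp [La, smul_eq_mul]; ring

lemma pd1_mul {b h : V2 → ℝ} {x : V2} (hb : DifferentiableAt ℝ b x)
    (hh : DifferentiableAt ℝ h x) :
    pd1 (fun y => b y * h y) x = pd1 b x * h x + b x * pd1 h x := by
  rw [pd1, fderiv_fun_mul hb hh]; simp [pd1, smul_eq_mul]; ring

lemma pd2_mul {b h : V2 → ℝ} {x : V2} (hb : DifferentiableAt ℝ b x)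
    (hh : DifferentiableAt ℝ h x) :
    pd2 (fun y => b y * h y) x = pd2 b x * h x + b x * pd2 h x := by
  rw [pd2, fderiv_fun_mul hb hh]; simp [pd2, smul_eq_mul]; ring

lemma clairaut {f : V2 → ℝ} (hf : ContDiff ℝ (⊤:ℕ∞) f) (x : V2) :
    pd1 (fun y => pd2 f y) x = pd2 (fun y => pd1 f y) x := by
  have hd : Differentiable ℝ f := hf.differentiable (by simp)
  have hf' : ContDiff ℝ (⊤:ℕ∞) (fderiv ℝ f) := hf.fderiv_right (by exact_mod_cast le_top)
  have hd' : Differentiable ℝ (fderiv ℝ f) := hf'.differentiable (by simp)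
  have hsym := second_derivative_symmetric (f' := fderiv ℝ f)
    (fun y => (hd y).hasFDerivAt) (hd' x).hasFDerivAt
  have key : ∀ v w : V2, fderiv ℝ (fun y => fderiv ℝ f y w) x v
      = fderiv ℝ (fderiv ℝ f) x v w := by
    intro v w
    have h := ((hd' x).hasFDerivAt.clm_apply (hasFDerivAt_const w x))
    rw [h.fderiv]; simp
  show fderiv ℝ (fun y => fderiv ℝ f y (0,1)) x (1,0)
      = fderiv ℝ (fun y => fderiv ℝ f y (1,0)) x (0,1)
  rw [key, key, hsym]

/-- the constant vector `m = |a|⁻² a` (third component 0) -/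
def mv (a : ℤ × ℤ) : V3 :=
  ![(((a.1:ℝ)^2 + (a.2:ℝ)^2))⁻¹ * a.1, (((a.1:ℝ)^2 + (a.2:ℝ)^2))⁻¹ * a.2, 0]

def Cm (a : ℤ × ℤ) (k : V3) : M3 := fun i j => k i * mv a j - mv a i * k j

lemma gradPhi_eq (a : ℤ × ℤ) {G : ℝ → ℝ} (hG : Differentiable ℝ G) (x : V2) (j : Fin 3) :
    gradPhi a G x j = mv a j * deriv G (adot a x) := by
  set c : ℝ := (((a.1:ℝ)^2 + (a.2:ℝ)^2))⁻¹ with hc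
  have h0 : Phif a G = fun y => (fun t => c * G t) (adot a y) := rfl
  have hd : DifferentiableAt ℝ (fun t => c * G t) (adot a x) := (hG _).const_mul c
  have hder : deriv (fun t => c * G t) (adot a x) = c * deriv G (adot a x) :=
    deriv_const_mul _ (hG _)
  fin_cases j
  · show pd1 (Phif a G) x = _
    rw [h0, pd1_comp a hd, hder]
    show _ = ![(((a.1:ℝ)^2 + (a.2:ℝ)^2))⁻¹ * a.1, (((a.1:ℝ)^2 + (a.2:ℝ)^2))⁻¹ * a.2, 0] 0 * _
    rw [Matrix.cons_val_zero]; ring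
  · show pd2 (Phif a G) x = _
    rw [h0, pd2_comp a hd, hder]
    show _ = ![(((a.1:ℝ)^2 + (a.2:ℝ)^2))⁻¹ * a.1, (((a.1:ℝ)^2 + (a.2:ℝ)^2))⁻¹ * a.2, 0] 1 * _
    rw [Matrix.cons_val_one, Matrix.cons_val_zero]; ring
  · show (0:ℝ) = _
    simp [mv]

lemma Om_eq (a : ℤ × ℤ) {G : ℝ → ℝ} (hG : Differentiable ℝ G) (k : V3) (x : V2)
    (i j : Fin 3) : Om a G k x i j = Cm a k i j * deriv G (adot a x) := by
  unfold Om Cm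
  rw [gradPhi_eq a hG x i, gradPhi_eq a hG x j]; ring

end Stmt8Aux

open Stmt8Aux

/-- Lemma 3.2, the corrector tensor: `Ω = k⊗∇Φ − ∇Φ⊗k` is skew-symmetric,
`div Ω = W`, and for every smooth `b` one has `div(bΩ) = bW + Ω∇b` with `div(div(bΩ)) = 0`. -/
theorem stmt8 (a : ℤ × ℤ) (ha : a ≠ 0) (g G : ℝ → ℝ)
    (hg : ContDiff ℝ (⊤ : ℕ∞) g) (hG : ContDiff ℝ (⊤ : ℕ∞) G)
    (hgper : Function.Periodic g (2*π)) (hGper : Function.Periodic G (2*π))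
    (hG'' : ∀ y, deriv (deriv G) y = g y)
    (k : V3) (hka : k 0 * (a.1:ℝ) + k 1 * (a.2:ℝ) = 0) :
    (∀ x : V2, ∀ i j : Fin 3, Om a G k x i j = -(Om a G k x j i)) ∧
    (∀ x : V2, ∀ i : Fin 3,
      pd1 (fun y => Om a G k y i 0) x + pd2 (fun y => Om a G k y i 1) x
        = Wf a g k x i) ∧
    (∀ b : V2 → ℝ, ContDiff ℝ (⊤ : ℕ∞) b →
      (∀ x : V2, ∀ i : Fin 3,
        pd1 (fun y => b y * Om a G k y i 0) x + pd2 (fun y => b y * Om a G k y i 1) x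
          = b x * Wf a g k x i
            + (Om a G k x i 0 * pd1 b x + Om a G k x i 1 * pd2 b x)) ∧
      (∀ x : V2,
        pd1 (fun y => pd1 (fun z => b z * Om a G k z 0 0) y
              + pd2 (fun z => b z * Om a G k z 0 1) y) x
        + pd2 (fun y => pd1 (fun z => b z * Om a G k z 1 0) y
              + pd2 (fun z => b z * Om a G k z 1 1) y) x = 0)) := by
  -- basic facts
  have haa : ((a.1:ℝ)^2 + (a.2:ℝ)^2) ≠ 0 := by
    have h : a.1 ≠ 0 ∨ a.2 ≠ 0 := by
      by_contra h; push_neg at h; exact ha (Prod.ext h.1 h.2)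
    rcases h with h | h
    · have h1 : (a.1:ℝ) ≠ 0 := Int.cast_ne_zero.mpr h
      positivity
    · have h2 : (a.2:ℝ) ≠ 0 := Int.cast_ne_zero.mpr h
      positivity
  have hGd : Differentiable ℝ G := hG.differentiable (by simp)
  have hGtop : ContDiff ℝ (⊤:ℕ∞) G := hG.of_le (by simp)
  have hG1 : ContDiff ℝ (⊤:ℕ∞) (deriv G) := (contDiff_infty_iff_deriv.mp hGtop).2
  have hG1d : Differentiable ℝ (deriv G) := hG1.differentiable (by simp)
  have hadot : Differentiable ℝ (adot a) :=
    (adot_contDiff a).differentiable (by simp)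
  have hCkey : ∀ i : Fin 3, (a.1:ℝ) * Cm a k i 0 + (a.2:ℝ) * Cm a k i 1 = k i := by
    intro i
    have hc : (((a.1:ℝ)^2 + (a.2:ℝ)^2))⁻¹ * ((a.1:ℝ)^2 + (a.2:ℝ)^2) = 1 :=
      inv_mul_cancel₀ haa
    have hm0 : mv a 0 = (((a.1:ℝ)^2 + (a.2:ℝ)^2))⁻¹ * a.1 := rfl
    have hm1 : mv a 1 = (((a.1:ℝ)^2 + (a.2:ℝ)^2))⁻¹ * a.2 := rfl
    simp only [Cm, hm0, hm1]
    linear_combination (k i) * hc - (mv a i) * hka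
  -- pd of the Omega entries
  have hFd : ∀ (C : ℝ) (u : ℝ), DifferentiableAt ℝ (fun t => C * deriv G t) u :=
    fun C u => (hG1d u).const_mul C
  have hFder : ∀ (C u : ℝ), deriv (fun t => C * deriv G t) u = C * g u := by
    intro C u; rw [deriv_const_mul _ (hG1d u), hG'']
  have homfun : ∀ i j : Fin 3, (fun y => Om a G k y i j)
      = fun y => (fun t => Cm a k i j * deriv G t) (adot a y) := by
    intro i j; funext y; exact Om_eq a hGd k y i j
  have hpd1Om : ∀ (x : V2) (i j : Fin 3),
      pd1 (fun y => Om a G k y i j) x = a.1 * (Cm a k i j * g (adot a x)) := by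
    intro x i j; rw [homfun i j, pd1_comp a (hFd _ _), hFder]
  have hpd2Om : ∀ (x : V2) (i j : Fin 3),
      pd2 (fun y => Om a G k y i j) x = a.2 * (Cm a k i j * g (adot a x)) := by
    intro x i j; rw [homfun i j, pd2_comp a (hFd _ _), hFder]
  refine ⟨?_, ?_, ?_⟩
  · intro x i j
    simp only [Om]; ring
  · intro x i
    rw [hpd1Om x i 0, hpd2Om x i 1]
    simp only [Wf]
    linear_combination g (adot a x) * hCkey i
  · intro b hb
    have hbd : Differentiable ℝ b := hb.differentiable (by simp)
    have hbtop : ContDiff ℝ (⊤:ℕ∞) b := hb.of_le (by simp)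
    -- differentiability of the Omega entry as a function of y
    have hOmd : ∀ (i j : Fin 3), Differentiable ℝ (fun y => Om a G k y i j) := by
      intro i j; rw [homfun i j]
      exact (hG1d.comp hadot).const_mul _
    have hpd1h : ∀ (x : V2) (i j : Fin 3),
        pd1 (fun y => b y * Om a G k y i j) x
          = pd1 b x * Om a G k x i j + b x * (a.1 * (Cm a k i j * g (adot a x))) := by
      intro x i j
      rw [pd1_mul (hbd x) ((hOmd i j) x), hpd1Om x i j]
    have hpd2h : ∀ (x : V2) (i j : Fin 3),
        pd2 (fun y => b y * Om a G k y i j) x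
          = pd2 b x * Om a G k x i j + b x * (a.2 * (Cm a k i j * g (adot a x))) := by
      intro x i j
      rw [pd2_mul (hbd x) ((hOmd i j) x), hpd2Om x i j]
    constructor
    · intro x i
      rw [hpd1h x i 0, hpd2h x i 1]
      simp only [Wf]
      linear_combination b x * g (adot a x) * hCkey i
    · intro x
      -- structural facts about Cm
      have hC00 : Cm a k 0 0 = 0 := by simp [Cm, mul_comm]
      have hC11 : Cm a k 1 1 = 0 := by simp [Cm, mul_comm]
      have hC10 : Cm a k 1 0 = -Cm a k 0 1 := by simp only [Cm]; ring
      set f01 : V2 → ℝ := fun z => b z * (Cm a k 0 1 * deriv G (adot a z)) with hf01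
      have hf01smooth : ContDiff ℝ (⊤:ℕ∞) f01 :=
        hbtop.mul (contDiff_const.mul (hG1.comp (adot_contDiff a)))
      have e00 : (fun z => b z * Om a G k z 0 0) = fun _ => (0:ℝ) := by
        funext z; rw [Om_eq a hGd k z 0 0, hC00]; ring
      have e01 : (fun z => b z * Om a G k z 0 1) = f01 := by
        funext z; rw [Om_eq a hGd k z 0 1]
      have e10 : (fun z => b z * Om a G k z 1 0) = fun z => -(f01 z) := by
        funext z; rw [Om_eq a hGd k z 1 0, hC10]; simp [hf01]
      have e11 : (fun z => b z * Om a G k z 1 1) = fun _ => (0:ℝ) := by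
        funext z; rw [Om_eq a hGd k z 1 1, hC11]; ring
      have i1 : (fun y => pd1 (fun z => b z * Om a G k z 0 0) y
            + pd2 (fun z => b z * Om a G k z 0 1) y) = fun y => pd2 f01 y := by
        funext y; rw [e00, e01]; simp [pd1]
      have i2 : (fun y => pd1 (fun z => b z * Om a G k z 1 0) y
            + pd2 (fun z => b z * Om a G k z 1 1) y) = fun y => -(pd1 f01 y) := by
        funext y; rw [e10, e11]
        simp [pd1, pd2, fderiv_neg]
      rw [i1, i2]
      have hneg : pd2 (fun y => -(pd1 f01 y)) x = -(pd2 (fun y => pd1 f01 y) x) := by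
        simp [pd2, fderiv_neg]
      rw [hneg, clairaut hf01smooth x]
      ring
end
end
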